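/- arXiv:2406.08494 — 2 statements merged into one kernel-verified Lean document; each statement's English description precedes it below -/
import Mathlib

section
/- For every natural number n, Robinson Arithmetic proves totality of ordering with respect to the numeral of n: for all x, x < n̄ ∨ n̄ < x ∨ x = n̄, where n̄ denotes the numeral S…S0 with n occurrences of S. -/
open FirstOrder FirstOrder.Language

/-- Function symbols of the language of arithmetic `{0, S, +, ×}`. -/
inductive ArithFunc : ℕ → Type
  | zero : ArithFunc 0
  | succ : ArithFunc 1
  | add : ArithFunc 2
  | mul : ArithFunc 2

/-- The first-order language of arithmetic. -/
def L : Language := ⟨ArithFunc, fun _ => Empty⟩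

/-- The term `0`. -/
def zeroT {α : Type} : L.Term α := Constants.term ArithFunc.zero

/-- The term `S t`. -/
def succT {α : Type} (t : L.Term α) : L.Term α := Functions.apply₁ ArithFunc.succ t

/-- The term `s + t`. -/
def addT {α : Type} (s t : L.Term α) : L.Term α := Functions.apply₂ ArithFunc.add s t

/-- The term `s × t`. -/
def mulT {α : Type} (s t : L.Term α) : L.Term α := Functions.apply₂ ArithFunc.mul s t

/-- The numeral `n̄ = S … S 0`. -/
def num {α : Type} : ℕ → L.Term α
  | 0 => zeroT
  | n + 1 => succT (num n)

/-- The `i`-th bounded variable as a term. -/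
def v {α : Type} {n : ℕ} (i : Fin n) : L.Term (α ⊕ Fin n) := Term.var (Sum.inr i)

/-- The ordering `s < t := ∃ z, S z + s = t`. -/
def ltF {α : Type} {n : ℕ} (s t : L.Term (α ⊕ Fin n)) : L.BoundedFormula α n :=
  BoundedFormula.ex
    (Term.bdEqual
      (addT (succT (Term.var (Sum.inr (Fin.last n)))) (s.relabel (Sum.map id Fin.castSucc)))
      (t.relabel (Sum.map id Fin.castSucc)))

/-- Axiom S0 : `∀ x, ¬ S x = 0`. -/
def axS0 : L.Sentence := ∀' ∼(Term.bdEqual (succT (v 0)) zeroT)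

/-- Axiom S1 : `∀ x y, S x = S y → x = y`. -/
def axS1 : L.Sentence := ∀' ∀' (Term.bdEqual (succT (v 0)) (succT (v 1)) ⟹ Term.bdEqual (v 0) (v 1))

/-- Axiom S2 : `∀ x, x = 0 ∨ ∃ y, S y = x`. -/
def axS2 : L.Sentence := ∀' (Term.bdEqual (v 0) zeroT ⊔ ∃' (Term.bdEqual (succT (v 1)) (v 0)))

/-- Axiom A0 : `∀ x, x + 0 = x`. -/
def axA0 : L.Sentence := ∀' (Term.bdEqual (addT (v 0) zeroT) (v 0))

/-- Axiom A1 : `∀ x y, x + S y = S (x + y)`. -/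
def axA1 : L.Sentence := ∀' ∀' (Term.bdEqual (addT (v 0) (succT (v 1))) (succT (addT (v 0) (v 1))))

/-- Axiom M0 : `∀ x, x × 0 = 0`. -/
def axM0 : L.Sentence := ∀' (Term.bdEqual (mulT (v 0) zeroT) zeroT)

/-- Axiom M1 : `∀ x y, x × S y = x + (x × y)`. -/
def axM1 : L.Sentence := ∀' ∀' (Term.bdEqual (mulT (v 0) (succT (v 1))) (addT (v 0) (mulT (v 0) (v 1))))

/-- Robinson Arithmetic. -/
def Q : L.Theory := {axS0, axS1, axS2, axA0, axA1, axM0, axM1}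

section Helpers
variable (M : Type*) [L.Structure M]

def zeroM : M := Language.constantMap (L := L) (M := M) (ArithFunc.zero : L.Constants)
variable {M}
def succM (a : M) : M := Structure.funMap (L := L) (M := M) ArithFunc.succ ![a]
def addM (a b : M) : M := Structure.funMap (L := L) (M := M) ArithFunc.add ![a, b]
variable (M)
def numVal : ℕ → M
  | 0 => zeroM M
  | k + 1 => succM (numVal k)

lemma realize_num {γ : Type} (f : γ → M) (k : ℕ) :
    Term.realize f (num k) = numVal M k := by
  induction k with
  | zero => exact Term.realize_constants (L := L)
  | succ k ih => show _ = succM (numVal M k); rw [← ih]; exact Term.realize_functions_apply₁ (L := L)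

lemma snocz {β : Type*} (p : Fin 0 → β) (b : β) : (Fin.snoc p b : Fin 1 → β) 0 = b := by
  simp [Fin.snoc]
lemma snoc0 {β : Type*} (p : Fin 1 → β) (b : β) : (Fin.snoc p b : Fin 2 → β) 0 = p 0 := by
  simp [Fin.snoc]
lemma snoc1 {β : Type*} (p : Fin 1 → β) (b : β) : (Fin.snoc p b : Fin 2 → β) 1 = b := by
  simp [Fin.snoc]

variable {M}
@[simp] lemma realize_zeroT' {γ : Type} (f : γ → M) :
    Term.realize f (Constants.term (L := L) ArithFunc.zero) = zeroM M :=
  Term.realize_constants (L := L)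
@[simp] lemma realize_succT' {γ : Type} (f : γ → M) (t : L.Term γ) :
    Term.realize f (Functions.apply₁ (L := L) ArithFunc.succ t) = succM (Term.realize f t) :=
  Term.realize_functions_apply₁ (L := L)
@[simp] lemma realize_addT' {γ : Type} (f : γ → M) (s t : L.Term γ) :
    Term.realize f (Functions.apply₂ (L := L) ArithFunc.add s t) =
      addM (Term.realize f s) (Term.realize f t) :=
  Term.realize_functions_apply₂ (L := L)
lemma key
    (hS2 : ∀ a : M, a = zeroM M ∨ ∃ b, succM b = a)
    (hA0 : ∀ a : M, addM a (zeroM M) = a)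
    (hA1 : ∀ a b : M, addM a (succM b) = succM (addM a b)) :
    ∀ (k : ℕ) (x : M), (∃ z, addM (succM z) x = numVal M k) ∨
      (∃ z, addM (succM z) (numVal M k) = x) ∨ x = numVal M k := by
  intro k
  induction k with
  | zero =>
      intro x
      rcases hS2 x with h | ⟨b, hb⟩
      · right; right; exact h
      · right; left; exact ⟨b, by rw [show numVal M 0 = zeroM M from rfl, hA0, hb]⟩
  | succ k ih =>
      intro x
      rcases hS2 x with h | ⟨y, hy⟩
      · left; exact ⟨numVal M k, by rw [h, hA0]; rfl⟩
      · rcases ih y with ⟨z, hz⟩ | ⟨z, hz⟩ | h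
        · left; exact ⟨z, by rw [← hy, hA1, hz]; rfl⟩
        · right; left
          exact ⟨z, by rw [show numVal M (k+1) = succM (numVal M k) from rfl, hA1, hz, hy]⟩
        · right; right; rw [← hy, h]; rfl
end Helpers


/-- For every `n`, Robinson Arithmetic proves `∀ x, x < n̄ ∨ n̄ < x ∨ x = n̄`. -/
theorem totality_wrt_numerals (n : ℕ) :
    Q ⊨ᵇ (∀' (ltF (α := Empty) (v 0) (num n) ⊔ ltF (num n) (v 0) ⊔
      Term.bdEqual (v 0) (num n)) : L.Sentence) := by
  intro M vv xs
  have hS2 := Theory.realize_sentence_of_mem (M := M) Q (show axS2 ∈ Q by simp [Q])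
  have hA0 := Theory.realize_sentence_of_mem (M := M) Q (show axA0 ∈ Q by simp [Q])
  have hA1 := Theory.realize_sentence_of_mem (M := M) Q (show axA1 ∈ Q by simp [Q])
  simp only [axS2, axA0, axA1, v, succT, zeroT, addT, Sentence.Realize, Formula.Realize] at hS2 hA0 hA1
  simp [snocz, snoc0, snoc1] at hS2 hA0 hA1
  simp only [ltF, v, succT, zeroT, addT, num, Sentence.Realize, Formula.Realize]
  simp [realize_num, snocz, snoc0, snoc1]
  intro a
  have h := key hS2 hA0 hA1 n a
  simpa [addM, succM, or_assoc] using h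
end

section
/- If g is represented in a theory T extending the axioms of successorship and f is defined by minimization, f(x⃗) = the least y such that g(x⃗, y) = 0 (assuming g(x⃗, z) is defined and nonzero for all z < y), then f is represented in T by the formula φ(x⃗, y) := ⟨g⟩(x⃗, y, 0) ∧ ∀z < y, ¬⟨g⟩(x⃗, z, 0), where ⟨g⟩ is the representation of g. -/
open FirstOrder FirstOrder.Language

/-- The induction axiom for the formula `φ` with one (bounded) variable:
`(φ(0) ∧ ∀ x, φ(x) → φ(S x)) → ∀ x, φ(x)`. -/
def indAx (φ : L.BoundedFormula Empty 1) : L.Sentence :=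
  ((∀' (Term.bdEqual (v 0) zeroT ⟹ φ)) ⊓
      ∀' (φ ⟹ ∀' (Term.bdEqual (v 1) (succT (v 0)) ⟹ φ.liftAt 1 0))) ⟹ ∀' φ

/-- Peano Arithmetic: Robinson arithmetic plus the induction schema. -/
def PA : L.Theory := Q ∪ Set.range indAx

/-- `∃! y, ψ(y)`, for `ψ` with one bounded variable. -/
def exUnique (ψ : L.BoundedFormula Empty 1) : L.Sentence :=
  ∃' (ψ ⊓ ∀' (ψ.liftAt 1 0 ⟹ Term.bdEqual (v 1) (v 0)))

/-- `φ(x̄⃗, ȳ)`: the result of substituting the numerals of `xs` and `y` for the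
free variables of `φ`. -/
def appNum {α : Type} (φ : L.Formula (α ⊕ Fin 1)) (xs : α → ℕ) (y : ℕ) : L.Sentence :=
  φ.subst (Sum.elim (fun i => num (xs i)) (fun _ => num y))

/-- `φ(x̄⃗, y)` with the numerals of `xs` substituted for the input variables and the
output variable `y` left as a bounded variable. -/
def outFormula {α : Type} (φ : L.Formula (α ⊕ Fin 1)) (xs : α → ℕ) : L.BoundedFormula Empty 1 :=
  (BoundedFormula.relabel (β := α) (n := 1)
      (Sum.elim (fun i => Sum.inl i) (fun _ => Sum.inr 0)) φ).subst (fun i => num (xs i))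

/-- `f` is represented in `T` by the formula `φ`: whenever `f xs = y`, the theory `T` proves
`(∃! y, φ(x̄⃗, y)) ∧ φ(x̄⃗, ȳ)`. -/
def RepresentsBy (T : L.Theory) {α : Type} (f : (α → ℕ) → ℕ) (φ : L.Formula (α ⊕ Fin 1)) : Prop :=
  ∀ (xs : α → ℕ) (y : ℕ), f xs = y →
    T ⊨ᵇ (exUnique (outFormula φ xs) ⊓ appNum φ xs y : L.Sentence)

/-- `f` is representable in `T`. -/
def Represents (T : L.Theory) {α : Type} (f : (α → ℕ) → ℕ) : Prop :=
  ∃ φ : L.Formula (α ⊕ Fin 1), RepresentsBy T f φ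

instance : Encodable (Σ n, L.Functions n) where
  encode x := match x with
    | ⟨_, ArithFunc.zero⟩ => 0
    | ⟨_, ArithFunc.succ⟩ => 1
    | ⟨_, ArithFunc.add⟩ => 2
    | ⟨_, ArithFunc.mul⟩ => 3
  decode n := match n with
    | 0 => some ⟨0, ArithFunc.zero⟩
    | 1 => some ⟨1, ArithFunc.succ⟩
    | 2 => some ⟨2, ArithFunc.add⟩
    | 3 => some ⟨2, ArithFunc.mul⟩
    | _ => none
  encodek := by rintro ⟨n, f⟩; cases f <;> rfl

instance : Encodable (Σ n, L.Relations n) where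
  encode x := x.2.elim
  decode _ := none
  encodek x := x.2.elim

/-- A fixed effective Gödel coding of sentences as natural numbers. -/
def code (A : L.Sentence) : ℕ := Encodable.encode A.listEncode

/-- `P(n̄)` : the predicate `P` applied to the numeral of `n`. -/
def papp (P : L.Formula (Fin 1)) (m : ℕ) : L.Sentence := P.subst (fun _ => num m)

/-- `P(⌜A⌝)` : the predicate `P` applied to the numeral of the code of the sentence `A`. -/
def pcode (P : L.Formula (Fin 1)) (A : L.Sentence) : L.Sentence := papp P (code A)

/-- The standard model `ℕ` of the language of arithmetic. -/
instance : L.Structure ℕ where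
  funMap f := match f with
    | ArithFunc.zero => fun _ => 0
    | ArithFunc.succ => fun x => x 0 + 1
    | ArithFunc.add => fun x => x 0 + x 1
    | ArithFunc.mul => fun x => x 0 * x 1
  RelMap r := r.elim

/-- Consistency of a theory: it does not prove both a sentence and its negation. -/
def Consistent (T : L.Theory) : Prop := ¬ ∃ A : L.Sentence, T ⊨ᵇ A ∧ T ⊨ᵇ (∼A : L.Sentence)

/-- A theory is computably enumerable: the set of codes of its theorems is c.e. -/
def TheoryCE (T : L.Theory) : Prop :=
  REPred fun n : ℕ => ∃ A : L.Sentence, code A = n ∧ T ⊨ᵇ A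

/-- The formula `⟨g⟩(x⃗, y, 0) ∧ ∀ z < y, ¬ ⟨g⟩(x⃗, z, 0)` representing a function
defined by minimization from `g`. -/
def minFormula {k : ℕ} (χ : L.Formula ((Fin k ⊕ Fin 1) ⊕ Fin 1)) : L.Formula (Fin k ⊕ Fin 1) :=
  (χ.subst (Sum.elim
      (Sum.elim (fun i => Term.var (Sum.inl i)) (fun _ => Term.var (Sum.inr 0)))
      (fun _ => zeroT))) ⊓
  ∀' (ltF (v 0) (Term.var (Sum.inl (Sum.inr 0))) ⟹
      ∼(BoundedFormula.relabel (β := Fin k ⊕ Fin 1) (n := 1)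
          (Sum.elim (fun i => Sum.inl (Sum.inl i)) (fun _ => Sum.inr (0 : Fin 1)))
          (χ.subst (Sum.elim
            (Sum.elim (fun i => Term.var (Sum.inl i)) (fun _ => Term.var (Sum.inr 0)))
            (fun _ => zeroT)))))


/-! ### Auxiliary semantic development -/

section AuxSem

variable {M : Type} [L.Structure M]

/-- Interpretation of `0`. -/
def zz : M := Structure.funMap (L := L) ArithFunc.zero default

/-- Interpretation of `S`. -/
def sc (a : M) : M := Structure.funMap (L := L) ArithFunc.succ ![a]

/-- Interpretation of `+`. -/
def pl (a b : M) : M := Structure.funMap (L := L) ArithFunc.add ![a, b]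

/-- Interpretation of numerals. -/
def nm : ℕ → M
  | 0 => zz
  | n + 1 => sc (nm n)

/-- Semantic strict order. -/
def ltM (a b : M) : Prop := ∃ w : M, pl (sc w) a = b

@[simp] lemma realize_zeroT {α : Type} (v : α → M) : (zeroT (α := α)).realize v = zz := by
  rw [zeroT]; exact (Term.realize_constants (L := L) (c := ArithFunc.zero) (v := v)).trans rfl

@[simp] lemma realize_succT {α : Type} (v : α → M) (t : L.Term α) :
    (succT t).realize v = sc (t.realize v) := by
  rw [succT]; exact Term.realize_functions_apply₁ (L := L) (f := ArithFunc.succ) (t := t) (v := v)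

@[simp] lemma realize_addT {α : Type} (v : α → M) (s t : L.Term α) :
    (addT s t).realize v = pl (s.realize v) (t.realize v) := by
  rw [addT]; exact Term.realize_functions_apply₂ (L := L) (f := ArithFunc.add) (t₁ := s) (t₂ := t) (v := v)

@[simp] lemma realize_num_s9 {α : Type} (v : α → M) (n : ℕ) :
    (num (α := α) n).realize v = nm n := by
  induction n with
  | zero => simp [num, nm]
  | succ n ih => simp [num, nm, ih]

lemma snoc0_eq (xs0 : Fin 0 → M) (a : M) : (Fin.snoc xs0 a) = fun _ => a := by
  funext i; fin_cases i; simp [Fin.snoc]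

lemma bf_realize_congr {α : Type} {φ : L.BoundedFormula α 0} {u u' : α → M}
    {xs : Fin 0 → M} {xs' : Fin 0 → M} (h : u = u') :
    φ.Realize u xs ↔ φ.Realize u' xs' := by
  subst h; rw [iff_eq_eq]; congr 1; exact funext fun i => i.elim0

lemma axS0_spec (h : M ⊨ (axS0 : L.Sentence)) : ∀ a : M, sc a ≠ zz := by
  intro a
  have := h
  simp only [axS0, Sentence.Realize, Formula.Realize, BoundedFormula.realize_all,
    BoundedFormula.realize_not, BoundedFormula.realize_bdEqual, Term.realize_var,
    realize_succT, realize_zeroT, v] at this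
  simpa [Fin.snoc] using this a

lemma axS1_spec (h : M ⊨ (axS1 : L.Sentence)) : ∀ a b : M, sc a = sc b → a = b := by
  intro a b
  have := h
  simp only [axS1, Sentence.Realize, Formula.Realize, BoundedFormula.realize_all,
    BoundedFormula.realize_imp, BoundedFormula.realize_bdEqual, Term.realize_var,
    realize_succT, v] at this
  simpa [Fin.snoc] using this a b

lemma axS2_spec (h : M ⊨ (axS2 : L.Sentence)) : ∀ a : M, a = zz ∨ ∃ b, sc b = a := by
  intro a
  have := h
  simp only [axS2, Sentence.Realize, Formula.Realize, BoundedFormula.realize_all,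
    BoundedFormula.realize_sup, BoundedFormula.realize_ex, BoundedFormula.realize_bdEqual,
    Term.realize_var, realize_succT, realize_zeroT, v] at this
  simpa [Fin.snoc] using this a

lemma axA0_spec (h : M ⊨ (axA0 : L.Sentence)) : ∀ a : M, pl a zz = a := by
  intro a
  have := h
  simp only [axA0, Sentence.Realize, Formula.Realize, BoundedFormula.realize_all,
    BoundedFormula.realize_bdEqual, Term.realize_var, realize_addT, realize_zeroT, v] at this
  simpa [Fin.snoc] using this a

lemma axA1_spec (h : M ⊨ (axA1 : L.Sentence)) : ∀ a b : M, pl a (sc b) = sc (pl a b) := by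
  intro a b
  have := h
  simp only [axA1, Sentence.Realize, Formula.Realize, BoundedFormula.realize_all,
    BoundedFormula.realize_bdEqual, Term.realize_var, realize_addT, realize_succT, v] at this
  simpa [Fin.snoc] using this a b

section Arith

variable (hS0 : ∀ a : M, sc a ≠ zz) (hS1 : ∀ a b : M, sc a = sc b → a = b)
  (hS2 : ∀ a : M, a = zz ∨ ∃ b, sc b = a)
  (hA0 : ∀ a : M, pl a zz = a) (hA1 : ∀ a b : M, pl a (sc b) = sc (pl a b))

include hA0 hA1 in
lemma pl_nm (m n : ℕ) : pl (sc (nm m)) (nm n) = (nm (m + 1 + n) : M) := by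
  induction n with
  | zero => simpa [nm] using hA0 _
  | succ n ih => rw [show m + 1 + (n+1) = (m + 1 + n) + 1 from rfl]; simp [nm, hA1, ih]

include hA0 hA1 in
lemma ltM_nm {n y : ℕ} (h : n < y) : ltM (nm n : M) (nm y) := by
  refine ⟨nm (y - n - 1), ?_⟩
  rw [pl_nm hA0 hA1]
  congr 1
  omega

include hS0 hS2 hA0 hA1 in
lemma not_ltM_zz (a : M) : ¬ ltM a zz := by
  rintro ⟨w, hw⟩
  rcases hS2 a with rfl | ⟨b, rfl⟩
  · rw [hA0] at hw; exact hS0 _ hw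
  · rw [hA1] at hw; exact hS0 _ hw

include hS1 hS2 hA1 in
omit hA0 in
lemma ltM_sc {a b : M} (h : ltM a (sc b)) : a = zz ∨ ∃ c, a = sc c ∧ ltM c b := by
  obtain ⟨w, hw⟩ := h
  rcases hS2 a with rfl | ⟨c, rfl⟩
  · exact Or.inl rfl
  · refine Or.inr ⟨c, rfl, w, ?_⟩
    rw [hA1] at hw
    exact hS1 _ _ hw

include hS0 hS1 hS2 hA0 hA1 in
lemma below_nm {y : ℕ} : ∀ a : M, ltM a (nm y) → ∃ n, n < y ∧ a = nm n := by
  induction y with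
  | zero => exact fun a h => absurd h (not_ltM_zz hS0 hS2 hA0 hA1 a)
  | succ y ih =>
    intro a h
    rcases ltM_sc hS1 hS2 hA1 (show ltM a (sc (nm y)) from h) with rfl | ⟨c, rfl, hc⟩
    · exact ⟨0, Nat.succ_pos _, rfl⟩
    · obtain ⟨n, hn, rfl⟩ := ih c hc
      exact ⟨n + 1, Nat.succ_lt_succ hn, rfl⟩

include hS2 hA0 hA1 in
lemma tricho (y : ℕ) : ∀ a : M, ltM a (nm y) ∨ a = nm y ∨ ltM (nm y) a := by
  induction y with
  | zero =>
    intro a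
    rcases hS2 a with rfl | ⟨b, rfl⟩
    · exact Or.inr (Or.inl rfl)
    · exact Or.inr (Or.inr ⟨b, hA0 _⟩)
  | succ y ih =>
    intro a
    rcases hS2 a with rfl | ⟨c, rfl⟩
    · exact Or.inl ⟨nm y, hA0 _⟩
    · rcases ih c with ⟨w, hw⟩ | rfl | ⟨w, hw⟩
      · exact Or.inl ⟨w, show pl (sc w) (sc c) = sc (nm y) by rw [hA1, hw]⟩
      · exact Or.inr (Or.inl rfl)
      · exact Or.inr (Or.inr ⟨w, show pl (sc w) (sc (nm y)) = sc c by rw [hA1, hw]⟩)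

end Arith

/-! Realize lemmas for the specific formula constructions. -/

lemma realize_ltF {α : Type} {n : ℕ} (u : α → M) (xsn : Fin n → M)
    (s t : L.Term (α ⊕ Fin n)) :
    (ltF s t).Realize u xsn ↔ ltM (s.realize (Sum.elim u xsn)) (t.realize (Sum.elim u xsn)) := by
  have hv : ∀ w : M, Sum.elim u (Fin.snoc xsn w) ∘ Sum.map id Fin.castSucc = Sum.elim u xsn := by
    intro w; funext a; rcases a with a | a <;> simp
  simp only [ltF, BoundedFormula.realize_ex, BoundedFormula.realize_bdEqual, realize_addT,
    realize_succT, Term.realize_var, Term.realize_relabel, Sum.elim_inr, Fin.snoc_last]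
  exact exists_congr fun w => by rw [hv w]

lemma realize_appNum {α : Type} (φ : L.Formula (α ⊕ Fin 1)) (xs : α → ℕ) (y : ℕ) :
    (M ⊨ appNum φ xs y) ↔ φ.Realize (Sum.elim (fun i => nm (xs i)) fun _ => (nm y : M)) := by
  rw [appNum, Sentence.Realize, Formula.Realize, BoundedFormula.realize_subst]
  refine bf_realize_congr ?_
  funext a; rcases a with a | a <;> simp

lemma realize_outFormula {α : Type} (φ : L.Formula (α ⊕ Fin 1)) (xs : α → ℕ)
    (vE : Empty → M) (xs1 : Fin 1 → M) :
    (outFormula φ xs).Realize vE xs1 ↔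
      φ.Realize (Sum.elim (fun i => nm (xs i)) fun _ => xs1 0) := by
  rw [outFormula, BoundedFormula.realize_subst, BoundedFormula.realize_relabel]
  refine bf_realize_congr ?_
  funext a; rcases a with a | a <;> simp

lemma realize_exUnique (ψ : L.BoundedFormula Empty 1) :
    (M ⊨ exUnique ψ) ↔ ∃ a : M, ψ.Realize default (fun _ => a) ∧
      ∀ b : M, ψ.Realize default (fun _ => b) → b = a := by
  rw [exUnique, Sentence.Realize, Formula.Realize, BoundedFormula.realize_ex]
  refine exists_congr fun a => ?_
  rw [BoundedFormula.realize_inf, BoundedFormula.realize_all, snoc0_eq]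
  refine and_congr Iff.rfl (forall_congr' fun b => ?_)
  rw [BoundedFormula.realize_imp, BoundedFormula.realize_liftAt (by norm_num),
    BoundedFormula.realize_bdEqual]
  have h1 : (Fin.snoc ((fun _ => a) : Fin 1 → M) b ∘ fun i : Fin 1 =>
      if (i : ℕ) < 0 then Fin.castAdd 1 i else Fin.addNat i 1) = fun _ => b := by
    funext i; fin_cases i; simp [Fin.snoc]
  rw [h1]
  simp only [v, Term.realize_var, Sum.elim_inr]
  simp [Fin.snoc]

/-- The key semantic predicate `χ(x⃗, b, c)`. -/
def ChiR {k : ℕ} (χ : L.Formula ((Fin k ⊕ Fin 1) ⊕ Fin 1)) (xv : Fin k → M) (b c : M) : Prop :=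
  χ.Realize (Sum.elim (Sum.elim xv fun _ => b) fun _ => c)

lemma realize_chi0 {k : ℕ} (χ : L.Formula ((Fin k ⊕ Fin 1) ⊕ Fin 1)) {γ : Type} (j : γ)
    (u : Fin k ⊕ γ → M) (xs0 : Fin 0 → M) :
    BoundedFormula.Realize (χ.subst (Sum.elim
      (Sum.elim (fun i => Term.var (Sum.inl i)) (fun _ => Term.var (Sum.inr j)))
      (fun _ => zeroT))) u xs0 ↔
      ChiR χ (fun i => u (Sum.inl i)) (u (Sum.inr j)) zz := by
  rw [BoundedFormula.realize_subst, ChiR]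
  refine bf_realize_congr ?_
  funext a
  rcases a with a | a
  · rcases a with a | a <;> simp
  · simp

lemma realize_minFormula {k : ℕ} (χ : L.Formula ((Fin k ⊕ Fin 1) ⊕ Fin 1))
    (u : Fin k ⊕ Fin 1 → M) (xs0 : Fin 0 → M) :
    BoundedFormula.Realize (minFormula χ) u xs0 ↔
      (ChiR χ (fun i => u (Sum.inl i)) (u (Sum.inr 0)) zz ∧
        ∀ b : M, ltM b (u (Sum.inr 0)) → ¬ ChiR χ (fun i => u (Sum.inl i)) b zz) := by
  rw [minFormula, BoundedFormula.realize_inf]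
  refine and_congr (realize_chi0 χ (0 : Fin 1) u xs0) ?_
  rw [BoundedFormula.realize_all]
  refine forall_congr' fun b => ?_
  rw [snoc0_eq, BoundedFormula.realize_imp, realize_ltF, BoundedFormula.realize_not,
    BoundedFormula.realize_relabel]
  exact imp_congr Iff.rfl (not_congr (realize_chi0 χ (0 : ℕ) _ _))

lemma sent_inf_iff (A B : L.Sentence) : (M ⊨ (A ⊓ B : L.Sentence)) ↔ (M ⊨ A) ∧ (M ⊨ B) :=
  Formula.realize_inf

lemma realize_outFormula' {α : Type} (φ : L.Formula (α ⊕ Fin 1)) (xsn : α → ℕ)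
    (vE : Empty → M) (a : M) :
    (outFormula φ xsn).Realize vE (fun _ => a) ↔
      φ.Realize (Sum.elim (fun i => nm (xsn i)) fun _ => a) :=
  realize_outFormula φ xsn vE (fun _ => a)

lemma realize_outMin {k : ℕ} (χ : L.Formula ((Fin k ⊕ Fin 1) ⊕ Fin 1)) (xsn : Fin k → ℕ)
    (vE : Empty → M) (a : M) :
    (outFormula (minFormula χ) xsn).Realize vE (fun _ => a) ↔
      (ChiR χ (fun i => nm (xsn i)) a zz ∧
        ∀ b : M, ltM b a → ¬ ChiR χ (fun i => nm (xsn i)) b zz) :=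
  (realize_outFormula' _ _ _ _).trans (realize_minFormula χ _ default)

lemma realize_appMin {k : ℕ} (χ : L.Formula ((Fin k ⊕ Fin 1) ⊕ Fin 1)) (xsn : Fin k → ℕ)
    (y : ℕ) :
    Sentence.Realize M (appNum (minFormula χ) xsn y) ↔
      (ChiR χ (fun i => nm (xsn i)) (nm y : M) zz ∧
        ∀ b : M, ltM b (nm y) → ¬ ChiR χ (fun i => nm (xsn i)) b zz) :=
  (realize_appNum (minFormula χ) xsn y).trans (realize_minFormula χ _ default)

lemma realize_exUnique_outMin {k : ℕ} (χ : L.Formula ((Fin k ⊕ Fin 1) ⊕ Fin 1))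
    (xsn : Fin k → ℕ) :
    Sentence.Realize M (exUnique (outFormula (minFormula χ) xsn)) ↔
      ∃ a : M, ((ChiR χ (fun i => nm (xsn i)) a zz ∧
          ∀ b : M, ltM b a → ¬ ChiR χ (fun i => nm (xsn i)) b zz) ∧
        ∀ b : M, (ChiR χ (fun i => nm (xsn i)) b zz ∧
          ∀ c : M, ltM c b → ¬ ChiR χ (fun i => nm (xsn i)) c zz) → b = a) := by
  rw [realize_exUnique]
  exact exists_congr fun a => and_congr (realize_outMin χ xsn default a)
    (forall_congr' fun b => imp_congr (realize_outMin χ xsn default b) Iff.rfl)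

end AuxSem

/-- Representability of functions defined by minimization: if `g` is represented in `T ⊇ Q`
by `χ` and `f x⃗` is the least `y` with `g(x⃗, y) = 0`, then `f` is represented by
`χ(x⃗, y, 0) ∧ ∀ z < y, ¬ χ(x⃗, z, 0)`. -/
theorem minimization_representable {k : ℕ} (T : L.Theory) (hQ : Q ⊆ T)
    (g : (Fin k → ℕ) → ℕ → ℕ) (χ : L.Formula ((Fin k ⊕ Fin 1) ⊕ Fin 1))
    (hg : RepresentsBy T (fun w : (Fin k ⊕ Fin 1) → ℕ =>
      g (fun i => w (Sum.inl i)) (w (Sum.inr 0))) χ)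
    (f : (Fin k → ℕ) → ℕ)
    (hf : ∀ xs : Fin k → ℕ, g xs (f xs) = 0 ∧ ∀ z < f xs, g xs z ≠ 0) :
    RepresentsBy T f (minFormula χ) := by
  intro xs y hy
  subst hy
  intro Mt vE xsE
  haveI : (Mt : Type) ⊨ T := Mt.is_model
  -- axioms of Q hold in the model
  have hS0 := axS0_spec (T.realize_sentence_of_mem (M := Mt) (hQ (show axS0 ∈ Q by simp [Q])))
  have hS1 := axS1_spec (T.realize_sentence_of_mem (M := Mt) (hQ (show axS1 ∈ Q by simp [Q])))
  have hS2 := axS2_spec (T.realize_sentence_of_mem (M := Mt) (hQ (show axS2 ∈ Q by simp [Q])))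
  have hA0 := axA0_spec (T.realize_sentence_of_mem (M := Mt) (hQ (show axA0 ∈ Q by simp [Q])))
  have hA1 := axA1_spec (T.realize_sentence_of_mem (M := Mt) (hQ (show axA1 ∈ Q by simp [Q])))
  set xv : Fin k → (Mt : Type) := fun i => nm (xs i) with hxv
  have hval : ∀ (n : ℕ) (c : (Mt : Type)),
      (Sum.elim (fun i => nm ((Sum.elim xs fun _ => n : Fin k ⊕ Fin 1 → ℕ) i))
          (fun _ : Fin 1 => c))
        = Sum.elim (Sum.elim xv fun _ => (nm n : (Mt : Type))) (fun _ : Fin 1 => c) := by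
    intro n c
    funext a
    rcases a with a | a
    · rcases a with a | a <;> rfl
    · rfl
  -- facts about χ from the representability of g
  have hgfact : ∀ n : ℕ, ChiR χ xv (nm n) (nm (g xs n)) ∧
      ∀ c : (Mt : Type), ChiR χ xv (nm n) c → c = nm (g xs n) := by
    intro n
    have h := hg (Sum.elim xs fun _ => n) (g xs n) rfl
    have h2 := h.realize_sentence Mt
    rw [sent_inf_iff] at h2
    obtain ⟨hex, happ⟩ := h2
    rw [realize_appNum] at happ
    rw [hval n (nm (g xs n))] at happ
    rw [realize_exUnique] at hex
    obtain ⟨a, ha, hu⟩ := hex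
    have conv : ∀ c : (Mt : Type), ChiR χ xv (nm n) c ↔
        (outFormula χ (Sum.elim xs fun _ => n)).Realize default (fun _ => c) := by
      intro c
      rw [realize_outFormula', hval n c]
      exact Iff.rfl
    have hvala : (nm (g xs n) : (Mt : Type)) = a := hu _ ((conv _).mp happ)
    exact ⟨happ, fun c hc => (hu c ((conv c).mp hc)).trans hvala.symm⟩
  -- negative facts below the minimum
  have notP : ∀ n : ℕ, n < f xs → ¬ ChiR χ xv (nm n) zz := by
    intro n hn h
    have h0 := (hgfact n).2 zz h
    obtain ⟨m, hm⟩ := Nat.exists_eq_succ_of_ne_zero ((hf xs).2 n hn)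
    rw [hm] at h0
    exact hS0 (nm m) h0.symm
  have Pyes : ChiR χ xv (nm (f xs)) zz := by
    have h0 := (hgfact (f xs)).1
    rw [(hf xs).1] at h0
    exact h0
  have Pbelow : ∀ b : (Mt : Type), ltM b (nm (f xs)) → ¬ ChiR χ xv b zz := by
    intro b hb hP
    obtain ⟨n, hn, rfl⟩ := below_nm hS0 hS1 hS2 hA0 hA1 b hb
    exact notP n hn hP
  have Uniq : ∀ b : (Mt : Type),
      (ChiR χ xv b zz ∧ ∀ c, ltM c b → ¬ ChiR χ xv c zz) → b = nm (f xs) := by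
    rintro b ⟨hPb, hmin⟩
    rcases tricho hS2 hA0 hA1 (f xs) b with h | h | h
    · obtain ⟨n, hn, rfl⟩ := below_nm hS0 hS1 hS2 hA0 hA1 b h
      exact absurd hPb (notP n hn)
    · exact h
    · exact absurd Pyes (hmin _ h)
  -- assemble the goal
  have hgoal : (Mt : Type) ⊨ (exUnique (outFormula (minFormula χ) xs) ⊓
      appNum (minFormula χ) xs (f xs) : L.Sentence) := by
    rw [sent_inf_iff]
    constructor
    · rw [realize_exUnique_outMin]
      exact ⟨nm (f xs), ⟨Pyes, Pbelow⟩, Uniq⟩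
    · rw [realize_appMin]
      exact ⟨Pyes, Pbelow⟩
  exact (bf_realize_congr (funext fun e => e.elim)).mpr hgoal
end
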